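/- Let (X,d) be a sequentially Yoneda-complete T1 bounded quasi-metric space. Then D is a quasi-metric on CBX (it satisfies the triangle inequality, and D(I,J) = D(J,I) = 0 implies I = J), and moreover for all I, J ∈ CBX, D(I,J) = 0 if and only if I ⊑ J; hence the specialization order induced by D on CBX coincides with the partial order ⊑ of CBX. -/

import Mathlib

open scoped NNReal

/-! Generic sequence notions for an arbitrary "distance" function `ρ`. -/

def IsCauchySeq {α : Type _} (ρ : α → α → ℝ) (u : ℕ → α) : Prop :=
  ∀ ε : ℝ, 0 < ε → ∃ N, ∀ n m, N ≤ n → n ≤ m → ρ (u n) (u m) < ε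

def IsBiCauchySeq {α : Type _} (ρ : α → α → ℝ) (u : ℕ → α) : Prop :=
  ∀ ε : ℝ, 0 < ε → ∃ N, ∀ n m, N ≤ n → N ≤ m → ρ (u n) (u m) < ε

/-- `sup_{m ≥ n} ρ (u m) y`. -/
noncomputable def supTail {α : Type _} (ρ : α → α → ℝ) (u : ℕ → α) (y : α) (n : ℕ) : ℝ :=
  sSup {t | ∃ m, n ≤ m ∧ t = ρ (u m) y}

/-- `x` is a Yoneda limit of `u`:  `ρ x y = inf_n sup_{m ≥ n} ρ (u m) y` for all `y`. -/
def IsYonedaLim {α : Type _} (ρ : α → α → ℝ) (u : ℕ → α) (x : α) : Prop :=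
  ∀ y, ρ x y = sInf (Set.range (supTail ρ u y))

def SeqYonedaCompleteD {α : Type _} (ρ : α → α → ℝ) : Prop :=
  ∀ u, IsCauchySeq ρ u → ∃ x, IsYonedaLim ρ u x

/-- Smyth completeness: every Cauchy sequence converges in the symmetrized metric. -/
def SmythCompleteD {α : Type _} (ρ : α → α → ℝ) : Prop :=
  ∀ u, IsCauchySeq ρ u → ∃ x, ∀ ε : ℝ, 0 < ε → ∃ N, ∀ n, N ≤ n →
    max (ρ x (u n)) (ρ (u n) x) < ε

/-- `inf_{m ≥ n} ρ e (u m)`. -/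
noncomputable def infTail {α : Type _} (ρ : α → α → ℝ) (u : ℕ → α) (e : α) (n : ℕ) : ℝ :=
  sInf {t | ∃ m, n ≤ m ∧ t = ρ e (u m)}

/-- `e` is a finite point: for every Cauchy sequence `u` with Yoneda limit `x`,
`ρ e x = sup_n inf_{m ≥ n} ρ e (u m)`. -/
def IsFinitePoint {α : Type _} (ρ : α → α → ℝ) (e : α) : Prop :=
  ∀ u x, IsCauchySeq ρ u → IsYonedaLim ρ u x →
    ρ e x = sSup (Set.range (infTail ρ u e))

/-- ω-algebraic: a countable set of finite points such that every point is a Yoneda limit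
of a Cauchy sequence of points from it. -/
def OmegaAlgebraicD {α : Type _} (ρ : α → α → ℝ) : Prop :=
  ∃ X0 : Set α, X0.Countable ∧ (∀ e ∈ X0, IsFinitePoint ρ e) ∧
    ∀ x, ∃ u : ℕ → α, (∀ n, u n ∈ X0) ∧ IsCauchySeq ρ u ∧ IsYonedaLim ρ u x

/-- A quasi-metric on `X`. -/
structure QuasiMetric (X : Type _) : Type _ where
  d : X → X → ℝ
  nonneg : ∀ x y, 0 ≤ d x y
  triangle : ∀ x y z, d x z ≤ d x y + d y z
  eq_iff : ∀ x y, x = y ↔ d x y = 0 ∧ d y x = 0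

/-- Formal balls over `X`. -/
abbrev FB (X : Type _) := X × ℝ≥0

/-- Nonempty finite subsets of the space of formal balls. -/
def PFin (X : Type _) : Type _ := {F : Set (FB X) // F.Finite ∧ F.Nonempty}

namespace QuasiMetric

variable {X : Type _} (Q : QuasiMetric X)

def IsT1 : Prop := ∀ x y, Q.d x y = 0 → x = y

def Bounded : Prop := ∃ C : ℝ, ∀ x y, Q.d x y ≤ C

def ball (x : X) (ε : ℝ) : Set X := {y | Q.d x y < ε}

/-- The topology `τ_d` induced by the quasi-metric. -/
def tau : TopologicalSpace X :=
  TopologicalSpace.generateFrom {s | ∃ x ε, 0 < ε ∧ s = Q.ball x ε}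

def dstar (x y : X) : ℝ := max (Q.d x y) (Q.d y x)

def SeqYonedaComplete : Prop := SeqYonedaCompleteD Q.d

def SmythComplete : Prop := SmythCompleteD Q.d

/-- `K` is `d⁻¹`-precompact. -/
def dInvPrecompact (K : Set X) : Prop :=
  ∀ ε : ℝ, 0 < ε → ∃ F : Set X, F.Finite ∧ F ⊆ K ∧ ∀ k ∈ K, ∃ x ∈ F, Q.d k x < ε

/-- The nonempty compact subsets of `(X, τ_d)`. -/
def K0 : Set (Set X) := {K | K.Nonempty ∧ @IsCompact X Q.tau K}

noncomputable def dPtSet (x : X) (B : Set X) : ℝ := sInf {t | ∃ b ∈ B, t = Q.d x b}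

noncomputable def dSetPt (A : Set X) (y : X) : ℝ := sInf {t | ∃ a ∈ A, t = Q.d a y}

/-- The Hausdorff quasi-metric. -/
noncomputable def Hd (A B : Set X) : ℝ :=
  max (sSup {t | ∃ b ∈ B, t = Q.dSetPt A b}) (sSup {t | ∃ a ∈ A, t = Q.dPtSet a B})

/-- Order on formal balls: `(x,r) ⊑ (y,s)  ↔  d x y ≤ r - s`. -/
def ble (a b : FB X) : Prop := Q.d a.1 b.1 ≤ (a.2 : ℝ) - (b.2 : ℝ)

/-- Auxiliary relation: `(x,r) ≺ (y,s)  ↔  d x y < r - s`. -/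
def blt (a b : FB X) : Prop := Q.d a.1 b.1 < (a.2 : ℝ) - (b.2 : ℝ)

def iota (x : X) : FB X := (x, 0)

/-- The quasi-metric `q` on formal balls. -/
noncomputable def q (a b : FB X) : ℝ :=
  max (Q.d a.1 b.1) |(a.2 : ℝ) - (b.2 : ℝ)| + ((b.2 : ℝ) - (a.2 : ℝ))

/-- The Egli–Milner relation `≺_EM` on nonempty finite sets of formal balls. -/
def em (F G : PFin X) : Prop :=
  (∀ b ∈ G.1, ∃ a ∈ F.1, Q.blt a b) ∧ (∀ a ∈ F.1, ∃ b ∈ G.1, Q.blt a b)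

/-- The non-strict Egli–Milner relation `⊑_EM`. -/
def emLE (F G : PFin X) : Prop :=
  (∀ a ∈ F.1, ∃ b ∈ G.1, Q.ble a b) ∧ (∀ b ∈ G.1, ∃ a ∈ F.1, Q.ble a b)

/-- `rF = max { r : (x,r) ∈ F }`. -/
noncomputable def rF (F : PFin X) : ℝ := sSup {t | ∃ p ∈ F.1, t = (p.2 : ℝ)}

/-- `δ(F,G) = min {(r-s) - d x y : (x,r) ∈ F, (y,s) ∈ G, (x,r) ≺ (y,s)}`. -/
noncomputable def delta (F G : PFin X) : ℝ :=
  sInf {t | ∃ a ∈ F.1, ∃ b ∈ G.1, Q.blt a b ∧ t = ((a.2 : ℝ) - (b.2 : ℝ)) - Q.d a.1 b.1}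

/-- The Hausdorff quasi-metric `H_q` on `P_fin(BX)` induced by `q`. -/
noncomputable def Hq (F G : PFin X) : ℝ :=
  max (sSup {t | ∃ a ∈ F.1, t = sInf {s | ∃ b ∈ G.1, s = Q.q a b}})
      (sSup {t | ∃ b ∈ G.1, t = sInf {s | ∃ a ∈ F.1, s = Q.q a b}})

/-- ω-chains in `(P_fin(BX), ≺_EM)`; `c n` plays the role of `F_{n+1}`. -/
def Chain : Type _ := {c : ℕ → PFin X // ∀ n, Q.em (c n) (c (n + 1))}

def chainLE (c c' : Q.Chain) : Prop := ∀ n, ∃ m, Q.em (c.1 n) (c'.1 m)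

def chainEquiv (c c' : Q.Chain) : Prop := Q.chainLE c c' ∧ Q.chainLE c' c

lemma blt_trans {a b c : FB X} (h1 : Q.blt a b) (h2 : Q.blt b c) : Q.blt a c := by
  have h3 := Q.triangle a.1 b.1 c.1
  unfold blt at h1 h2 ⊢
  linarith

lemma em_trans {F G H : PFin X} (h1 : Q.em F G) (h2 : Q.em G H) : Q.em F H := by
  constructor
  · intro b hb
    obtain ⟨a, ha, hab⟩ := h2.1 b hb
    obtain ⟨a', ha', h'⟩ := h1.1 a ha
    exact ⟨a', ha', Q.blt_trans h' hab⟩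
  · intro a ha
    obtain ⟨b, hb, hab⟩ := h1.2 a ha
    obtain ⟨c, hc, hbc⟩ := h2.2 b hb
    exact ⟨c, hc, Q.blt_trans hab hbc⟩

lemma chainLE_refl (c : Q.Chain) : Q.chainLE c c := fun n => ⟨n + 1, c.2 n⟩

lemma chainLE_trans {a b c : Q.Chain} (h1 : Q.chainLE a b) (h2 : Q.chainLE b c) :
    Q.chainLE a c := by
  intro n
  obtain ⟨m, hm⟩ := h1 n
  obtain ⟨k, hk⟩ := h2 m
  exact ⟨k, Q.em_trans hm hk⟩

def chainSetoid : Setoid Q.Chain where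
  r := Q.chainEquiv
  iseqv := ⟨fun c => ⟨Q.chainLE_refl c, Q.chainLE_refl c⟩,
    fun h => ⟨h.2, h.1⟩,
    fun h1 h2 => ⟨Q.chainLE_trans h1.1 h2.1, Q.chainLE_trans h2.2 h1.2⟩⟩

/-- The ω-Plotkin domain `CBX`: equivalence classes of ω-chains in `(P_fin(BX), ≺_EM)`. -/
def CBX : Type _ := Quotient Q.chainSetoid

/-- The partial order of `CBX`. -/
def cbLE : Q.CBX → Q.CBX → Prop :=
  Quotient.lift₂ Q.chainLE (by
    intro a b a' b' ha hb
    have ha' : Q.chainEquiv a a' := ha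
    have hb' : Q.chainEquiv b b' := hb
    exact propext ⟨fun h => Q.chainLE_trans (Q.chainLE_trans ha'.2 h) hb'.1,
      fun h => Q.chainLE_trans (Q.chainLE_trans ha'.1 h) hb'.2⟩)

def chainWB (c c' : Q.Chain) : Prop := ∃ m, ∀ n, Q.em (c.1 n) (c'.1 m)

/-- The way-below relation of `CBX`. -/
def cbWB : Q.CBX → Q.CBX → Prop :=
  Quotient.lift₂ Q.chainWB (by
    intro a b a' b' ha hb
    have ha' : Q.chainEquiv a a' := ha
    have hb' : Q.chainEquiv b b' := hb
    apply propext
    constructor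
    · rintro ⟨m, hm⟩
      obtain ⟨k, hk⟩ := hb'.1 m
      refine ⟨k, fun n => ?_⟩
      obtain ⟨p, hp⟩ := ha'.2 n
      exact Q.em_trans hp (Q.em_trans (hm p) hk)
    · rintro ⟨m, hm⟩
      obtain ⟨k, hk⟩ := hb'.2 m
      refine ⟨k, fun n => ?_⟩
      obtain ⟨p, hp⟩ := ha'.1 n
      exact Q.em_trans hp (Q.em_trans (hm p) hk))

/-- The Scott topology of `CBX`, generated by the sets `↟I`. -/
def scottTop : TopologicalSpace Q.CBX :=
  TopologicalSpace.generateFrom {s | ∃ I : Q.CBX, s = {J | Q.cbWB I J}}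

def upSet (F : PFin X) : Set (FB X) := {b | ∃ a ∈ F.1, Q.ble a b}

/-- `I⁺ = ⋂_n ↑F_n` for a representing chain. -/
def Iplus (c : Q.Chain) : Set (FB X) := ⋂ n, Q.upSet (c.1 n)

noncomputable def IplusQ (I : Q.CBX) : Set (FB X) := Q.Iplus (Quotient.out I)

/-- `r̄ I = inf { rF : F occurs in some chain representing I }`. -/
noncomputable def rbar (I : Q.CBX) : ℝ :=
  sInf {t | ∃ c : Q.Chain, Quotient.mk Q.chainSetoid c = I ∧ ∃ n, t = rF (c.1 n)}

/-- `c` is a standard representation of `K`: `c n` (playing the role of `F_{n+1}`) is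
`{(x_i^j, 1/(n+1)) : 1 ≤ j ≤ n+1, 1 ≤ i ≤ m_j}` where the `x_i^j ∈ K` satisfy
`∀ y ∈ K, ∃ i, d (x_i^j) y < 1/(2 j²)`. -/
def IsStdRep (K : Set X) (c : Q.Chain) : Prop :=
  ∃ (m : ℕ → ℕ) (x : ℕ → ℕ → X),
    (∀ j i, 1 ≤ j → 1 ≤ i → i ≤ m j → x j i ∈ K) ∧
    (∀ j, 1 ≤ j → ∀ y ∈ K, ∃ i, 1 ≤ i ∧ i ≤ m j ∧ Q.d (x j i) y < 1 / (2 * (j : ℝ) ^ 2)) ∧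
    (∀ n : ℕ, (c.1 n).1 =
      {p : FB X | ∃ j i, 1 ≤ j ∧ j ≤ n + 1 ∧ 1 ≤ i ∧ i ≤ m j ∧
        p = (x j i, ((n : ℝ≥0) + 1)⁻¹)})

/-- `D` on representing chains: `sup_n inf_m H_q(F_n, G_m)`. -/
noncomputable def Dchain (c c' : Q.Chain) : ℝ :=
  sSup {t | ∃ n, t = sInf {s | ∃ m, s = Q.Hq (c.1 n) (c'.1 m)}}

/-- The quasi-metric `D` on `CBX`. -/
noncomputable def D (I J : Q.CBX) : ℝ := Q.Dchain (Quotient.out I) (Quotient.out J)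

/-- The topology induced by `D` on `CBX`. -/
def DTop : TopologicalSpace Q.CBX :=
  TopologicalSpace.generateFrom
    {s | ∃ (I : Q.CBX) (ε : ℝ), 0 < ε ∧ s = {J | Q.D I J < ε}}

/-- The hyperspace `K_0(X)` as a type. -/
def K0T : Type _ := {K : Set X // K.Nonempty ∧ @IsCompact X Q.tau K}

/-- The Vietoris topology on `K_0(X)`. -/
def vietoris : TopologicalSpace Q.K0T :=
  TopologicalSpace.generateFrom
    ({s | ∃ V : Set X, @IsOpen X Q.tau V ∧ s = {K : Q.K0T | (K.1 ∩ V).Nonempty}} ∪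
     {s | ∃ V : Set X, @IsOpen X Q.tau V ∧ s = {K : Q.K0T | K.1 ⊆ V}})

/-- The topology of the Hausdorff quasi-metric on `K_0(X)`. -/
def hdTop : TopologicalSpace Q.K0T :=
  TopologicalSpace.generateFrom
    {s | ∃ (K : Q.K0T) (ε : ℝ), 0 < ε ∧ s = {L : Q.K0T | Q.Hd K.1 L.1 < ε}}

/-- Round ideals of `(P_fin(BX), ≺_EM)`. -/
def IsRoundIdeal (I : Set (PFin X)) : Prop :=
  I.Nonempty ∧ (∀ F G : PFin X, Q.em F G → G ∈ I → F ∈ I) ∧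
  (∀ F ∈ I, ∀ G ∈ I, ∃ H ∈ I, Q.em F H ∧ Q.em G H)

end QuasiMetric

/-!
`q` satisfies the triangle inequality and vanishes on `≺`, so `H_q` satisfies it on
`P_fin(BX)` and vanishes on `≺_EM`; taking `sup_n inf_m` preserves the triangle inequality, and `F_n ≺_EM G_m` for all `n` forces `D = 0`. Conversely, the finitely
many pairs witnessing `F_n ≺_EM F_{n+1}` have a uniform slack `δ(F_n, F_{n+1}) > 0`, and any `G`
with `H_q(F_{n+1}, G) < δ(F_n, F_{n+1})` already satisfies `F_n ≺_EM G`. Boundedness of `d`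
(with the radii of a chain bounded by those of its first member) makes all the suprema finite.
-/

section FiniteSupInf

variable {α : Type _} {s : Set α}

lemma setOf_exists_mem_eq_image (s : Set α) (f : α → ℝ) :
    {t | ∃ a ∈ s, t = f a} = f '' s := by
  ext t
  simp [eq_comm]

lemma csSup_setOf_le_iff (hs : s.Finite) (hne : s.Nonempty) (f : α → ℝ) {B : ℝ} :
    sSup {t | ∃ a ∈ s, t = f a} ≤ B ↔ ∀ a ∈ s, f a ≤ B := by
  rw [setOf_exists_mem_eq_image, csSup_le_iff (hs.image f).bddAbove (hne.image f),
    Set.forall_mem_image]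

lemma csInf_setOf_le_iff (hs : s.Finite) (hne : s.Nonempty) (f : α → ℝ) {B : ℝ} :
    sInf {t | ∃ a ∈ s, t = f a} ≤ B ↔ ∃ a ∈ s, f a ≤ B := by
  rw [setOf_exists_mem_eq_image]
  constructor
  · intro h
    obtain ⟨a, ha, hfa⟩ := (hne.image f).csInf_mem (hs.image f)
    exact ⟨a, ha, hfa ▸ h⟩
  · rintro ⟨a, ha, h⟩
    exact (csInf_le (hs.image f).bddBelow ⟨a, ha, rfl⟩).trans h

end FiniteSupInf

namespace QuasiMetric

variable {X : Type _} (Q : QuasiMetric X)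

lemma radius_lt_of_blt {a b : FB X} (h : Q.blt a b) : (b.2 : ℝ) < a.2 := by
  have := Q.nonneg a.1 b.1
  unfold blt at h
  linarith

lemma q_nonneg (a b : FB X) : 0 ≤ Q.q a b := by
  unfold q
  linarith [le_abs_self ((a.2 : ℝ) - b.2), le_max_right (Q.d a.1 b.1) |(a.2 : ℝ) - b.2|]

lemma d_add_sub_le_q (a b : FB X) : Q.d a.1 b.1 + ((b.2 : ℝ) - a.2) ≤ Q.q a b := by
  unfold q
  linarith [le_max_left (Q.d a.1 b.1) |(a.2 : ℝ) - b.2|]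

lemma q_le (a b : FB X) : Q.q a b ≤ Q.d a.1 b.1 + 2 * b.2 := by
  unfold q
  have hmax := max_le_add_of_nonneg (Q.nonneg a.1 b.1) (abs_nonneg ((a.2 : ℝ) - b.2))
  have habs : |(a.2 : ℝ) - b.2| ≤ a.2 + b.2 :=
    abs_le.2 ⟨by linarith [a.2.coe_nonneg], by linarith [b.2.coe_nonneg]⟩
  linarith

lemma q_triangle (a b c : FB X) : Q.q a c ≤ Q.q a b + Q.q b c := by
  unfold q
  have hd : Q.d a.1 c.1 ≤
      max (Q.d a.1 b.1) |(a.2 : ℝ) - b.2| + max (Q.d b.1 c.1) |(b.2 : ℝ) - c.2| :=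
    (Q.triangle a.1 b.1 c.1).trans (add_le_add (le_max_left _ _) (le_max_left _ _))
  have hr : |(a.2 : ℝ) - c.2| ≤
      max (Q.d a.1 b.1) |(a.2 : ℝ) - b.2| + max (Q.d b.1 c.1) |(b.2 : ℝ) - c.2| :=
    (abs_sub_le _ _ _).trans (add_le_add (le_max_right _ _) (le_max_right _ _))
  linarith [max_le hd hr]

lemma q_eq_zero_of_blt {a b : FB X} (h : Q.blt a b) : Q.q a b = 0 := by
  unfold blt at h
  unfold q
  rw [abs_of_pos (by linarith [Q.nonneg a.1 b.1]), max_eq_right h.le]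
  ring

lemma Hq_le_iff (F G : PFin X) {B : ℝ} :
    Q.Hq F G ≤ B ↔
      (∀ a ∈ F.1, ∃ b ∈ G.1, Q.q a b ≤ B) ∧ (∀ b ∈ G.1, ∃ a ∈ F.1, Q.q a b ≤ B) := by
  rw [Hq, max_le_iff, csSup_setOf_le_iff F.2.1 F.2.2, csSup_setOf_le_iff G.2.1 G.2.2]
  simp only [csInf_setOf_le_iff G.2.1 G.2.2, csInf_setOf_le_iff F.2.1 F.2.2]

lemma Hq_le_of_forall_q_le {F G : PFin X} {B : ℝ}
    (h : ∀ a ∈ F.1, ∀ b ∈ G.1, Q.q a b ≤ B) : Q.Hq F G ≤ B :=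
  (Q.Hq_le_iff F G).2 ⟨fun a ha => G.2.2.imp fun b hb => ⟨hb, h a ha b hb⟩,
    fun b hb => F.2.2.imp fun a ha => ⟨ha, h a ha b hb⟩⟩

lemma Hq_nonneg (F G : PFin X) : 0 ≤ Q.Hq F G := by
  obtain ⟨b, hb⟩ := G.2.2
  obtain ⟨a, -, hab⟩ := ((Q.Hq_le_iff F G).1 le_rfl).2 b hb
  exact (Q.q_nonneg a b).trans hab

lemma Hq_triangle (F G H : PFin X) : Q.Hq F H ≤ Q.Hq F G + Q.Hq G H := by
  obtain ⟨hFG, hGF⟩ := (Q.Hq_le_iff F G).1 le_rfl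
  obtain ⟨hGH, hHG⟩ := (Q.Hq_le_iff G H).1 le_rfl
  refine (Q.Hq_le_iff F H).2 ⟨fun a ha => ?_, fun c hc => ?_⟩
  · obtain ⟨b, hb, hab⟩ := hFG a ha
    obtain ⟨c, hc, hbc⟩ := hGH b hb
    exact ⟨c, hc, (Q.q_triangle a b c).trans (add_le_add hab hbc)⟩
  · obtain ⟨b, hb, hbc⟩ := hHG c hc
    obtain ⟨a, ha, hab⟩ := hGF b hb
    exact ⟨a, ha, (Q.q_triangle a b c).trans (add_le_add hab hbc)⟩

lemma Hq_eq_zero_of_em {F G : PFin X} (h : Q.em F G) : Q.Hq F G = 0 :=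
  le_antisymm
    ((Q.Hq_le_iff F G).2
      ⟨fun a ha => (h.2 a ha).imp fun _ ⟨hb, hab⟩ => ⟨hb, (Q.q_eq_zero_of_blt hab).le⟩,
        fun b hb => (h.1 b hb).imp fun _ ⟨ha, hab⟩ => ⟨ha, (Q.q_eq_zero_of_blt hab).le⟩⟩)
    (Q.Hq_nonneg F G)

lemma delta_le {F G : PFin X} {a b : FB X} (ha : a ∈ F.1) (hb : b ∈ G.1) (hab : Q.blt a b) :
    Q.delta F G ≤ ((a.2 : ℝ) - b.2) - Q.d a.1 b.1 := by
  refine csInf_le ⟨0, ?_⟩ ⟨a, ha, b, hb, hab, rfl⟩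
  rintro t ⟨a', -, b', -, hab', rfl⟩
  unfold blt at hab'
  linarith

lemma delta_pos {F G : PFin X} (h : Q.em F G) : 0 < Q.delta F G := by
  have hfin : {t | ∃ a ∈ F.1, ∃ b ∈ G.1, Q.blt a b ∧
      t = ((a.2 : ℝ) - b.2) - Q.d a.1 b.1}.Finite := by
    refine ((F.2.1.prod G.2.1).image
      fun p : FB X × FB X => ((p.1.2 : ℝ) - p.2.2) - Q.d p.1.1 p.2.1).subset ?_
    rintro t ⟨a, ha, b, hb, -, rfl⟩
    exact ⟨(a, b), ⟨ha, hb⟩, rfl⟩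
  obtain ⟨b, hb⟩ := G.2.2
  obtain ⟨a, ha, hab⟩ := h.1 b hb
  obtain ⟨a', -, b', -, hab', hδ⟩ := Set.Nonempty.csInf_mem (by exact ⟨_, a, ha, b, hb, hab, rfl⟩) hfin
  unfold blt at hab'
  rw [delta, hδ]
  linarith

/-- `δ(F, F')` is the Egli–Milner analogue of the fact that `(x, r) ≺ (y, s)` persists when
`(y, s)` is replaced by any formal ball at `q`-distance less than the slack `r - s - d x y`. -/
lemma em_of_Hq_lt_delta {F F' G : PFin X} (hFF' : Q.em F F') (h : Q.Hq F' G < Q.delta F F') :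
    Q.em F G := by
  obtain ⟨hF'G, hGF'⟩ := (Q.Hq_le_iff F' G).1 le_rfl
  have step : ∀ a ∈ F.1, ∀ b ∈ F'.1, Q.blt a b → ∀ g ∈ G.1, Q.q b g ≤ Q.Hq F' G →
      Q.blt a g := by
    intro a ha b hb hab g _ hbg
    have := Q.delta_le ha hb hab
    unfold blt
    linarith [Q.triangle a.1 b.1 g.1, Q.d_add_sub_le_q b g]
  refine ⟨fun g hg => ?_, fun a ha => ?_⟩
  · obtain ⟨b, hb, hbg⟩ := hGF' g hg
    obtain ⟨a, ha, hab⟩ := hFF'.1 b hb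
    exact ⟨a, ha, step a ha b hb hab g hg hbg⟩
  · obtain ⟨b, hb, hab⟩ := hFF'.2 a ha
    obtain ⟨g, hg, hbg⟩ := hF'G b hb
    exact ⟨g, hg, step a ha b hb hab g hg hbg⟩

lemma exists_radius_bound (c : Q.Chain) : ∃ R : ℝ, ∀ n, ∀ p ∈ (c.1 n).1, (p.2 : ℝ) ≤ R := by
  obtain ⟨R, hR⟩ := ((c.1 0).2.1.image fun p : FB X => (p.2 : ℝ)).bddAbove
  refine ⟨R, fun n => ?_⟩
  induction n with
  | zero => exact fun p hp => hR ⟨p, hp, rfl⟩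
  | succ n ih =>
    intro p hp
    obtain ⟨a, ha, hap⟩ := (c.2 n).1 p hp
    exact (Q.radius_lt_of_blt hap).le.trans (ih a ha)

lemma exists_Hq_chain_le (hB : Q.Bounded) (c c' : Q.Chain) :
    ∃ B : ℝ, ∀ n m, Q.Hq (c.1 n) (c'.1 m) ≤ B := by
  obtain ⟨C, hC⟩ := hB
  obtain ⟨R, hR⟩ := Q.exists_radius_bound c'
  exact ⟨C + 2 * R, fun n m => Q.Hq_le_of_forall_q_le fun a _ b hb =>
    (Q.q_le a b).trans (by linarith [hC a.1 b.1, hR m b hb])⟩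

lemma Dchain_nonneg (c c' : Q.Chain) : 0 ≤ Q.Dchain c c' :=
  Real.sSup_nonneg <| by
    rintro t ⟨n, rfl⟩
    exact Real.sInf_nonneg <| by
      rintro s ⟨m, rfl⟩
      exact Q.Hq_nonneg _ _

lemma Hq_range_bddBelow (c c' : Q.Chain) (n : ℕ) :
    BddBelow {s | ∃ m, s = Q.Hq (c.1 n) (c'.1 m)} :=
  ⟨0, by rintro s ⟨m, rfl⟩; exact Q.Hq_nonneg _ _⟩

lemma Dchain_le_of_forall_exists_Hq_le {c c' : Q.Chain} {B : ℝ}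
    (h : ∀ n, ∃ m, Q.Hq (c.1 n) (c'.1 m) ≤ B) : Q.Dchain c c' ≤ B := by
  refine csSup_le ⟨_, 0, rfl⟩ ?_
  rintro t ⟨n, rfl⟩
  obtain ⟨m, hm⟩ := h n
  exact (csInf_le (Q.Hq_range_bddBelow c c' n) ⟨m, rfl⟩).trans hm

lemma exists_Hq_lt_of_Dchain_lt (hB : Q.Bounded) {c c' : Q.Chain} {r : ℝ}
    (h : Q.Dchain c c' < r) (n : ℕ) : ∃ m, Q.Hq (c.1 n) (c'.1 m) < r := by
  obtain ⟨B, hBnd⟩ := Q.exists_Hq_chain_le hB c c'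
  have hbdd : BddAbove {t | ∃ n, t = sInf {s | ∃ m, s = Q.Hq (c.1 n) (c'.1 m)}} := by
    refine ⟨B, ?_⟩
    rintro t ⟨k, rfl⟩
    exact (csInf_le (Q.Hq_range_bddBelow c c' k) ⟨0, rfl⟩).trans (hBnd k 0)
  obtain ⟨_, ⟨m, rfl⟩, hm⟩ := exists_lt_of_csInf_lt (by exact ⟨_, 0, rfl⟩)
    ((le_csSup hbdd ⟨n, rfl⟩).trans_lt h)
  exact ⟨m, hm⟩

lemma Dchain_triangle (hB : Q.Bounded) (c c' c'' : Q.Chain) :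
    Q.Dchain c c'' ≤ Q.Dchain c c' + Q.Dchain c' c'' := by
  refine le_of_forall_pos_le_add fun ε hε => Q.Dchain_le_of_forall_exists_Hq_le fun n => ?_
  obtain ⟨m, hm⟩ := Q.exists_Hq_lt_of_Dchain_lt hB
    (lt_add_of_pos_right (Q.Dchain c c') (half_pos hε)) n
  obtain ⟨k, hk⟩ := Q.exists_Hq_lt_of_Dchain_lt hB
    (lt_add_of_pos_right (Q.Dchain c' c'') (half_pos hε)) m
  exact ⟨k, (Q.Hq_triangle _ _ _).trans (by linarith)⟩

lemma Dchain_eq_zero_iff (hB : Q.Bounded) (c c' : Q.Chain) :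
    Q.Dchain c c' = 0 ↔ Q.chainLE c c' := by
  refine ⟨fun h n => ?_, fun h => ?_⟩
  · obtain ⟨m, hm⟩ := Q.exists_Hq_lt_of_Dchain_lt hB (h.trans_lt (Q.delta_pos (c.2 n))) (n + 1)
    exact ⟨m, Q.em_of_Hq_lt_delta (c.2 n) hm⟩
  · refine le_antisymm (Q.Dchain_le_of_forall_exists_Hq_le fun n => ?_) (Q.Dchain_nonneg c c')
    obtain ⟨m, hm⟩ := h n
    exact ⟨m, (Q.Hq_eq_zero_of_em hm).le⟩

lemma cbLE_iff_chainLE_out (I J : Q.CBX) : Q.cbLE I J ↔ Q.chainLE I.out J.out :=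
  Iff.of_eq (congrArg₂ Q.cbLE (Quotient.out_eq I) (Quotient.out_eq J)).symm

lemma cbLE_antisymm {I J : Q.CBX} (hIJ : Q.cbLE I J) (hJI : Q.cbLE J I) : I = J := by
  induction I using Quotient.inductionOn
  induction J using Quotient.inductionOn
  exact Quotient.sound ⟨hIJ, hJI⟩

lemma D_eq_zero_iff (hB : Q.Bounded) (I J : Q.CBX) : Q.D I J = 0 ↔ Q.cbLE I J :=
  (Q.Dchain_eq_zero_iff hB _ _).trans (Q.cbLE_iff_chainLE_out I J).symm

end QuasiMetric

theorem stmt14_general {X : Type} (Q : QuasiMetric X) (hB : Q.Bounded) :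
    (∀ I J K : Q.CBX, Q.D I K ≤ Q.D I J + Q.D J K) ∧
    (∀ I J : Q.CBX, Q.D I J = 0 → Q.D J I = 0 → I = J) ∧
    (∀ I J : Q.CBX, Q.D I J = 0 ↔ Q.cbLE I J) :=
  ⟨fun _ _ _ => Q.Dchain_triangle hB _ _ _,
    fun I J hIJ hJI => Q.cbLE_antisymm ((Q.D_eq_zero_iff hB I J).1 hIJ)
      ((Q.D_eq_zero_iff hB J I).1 hJI),
    Q.D_eq_zero_iff hB⟩

/-- `D` is a quasi-metric on `CBX` whose specialization order coincides with
the partial order `⊑` of `CBX`. -/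
theorem stmt14 {X : Type} (Q : QuasiMetric X) (hT1 : Q.IsT1) (hB : Q.Bounded)
    (hY : Q.SeqYonedaComplete) :
    (∀ I J K : Q.CBX, Q.D I K ≤ Q.D I J + Q.D J K) ∧
    (∀ I J : Q.CBX, Q.D I J = 0 → Q.D J I = 0 → I = J) ∧
    (∀ I J : Q.CBX, Q.D I J = 0 ↔ Q.cbLE I J) :=
  stmt14_general Q hB
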